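/- arXiv:1711.07564 — 2 statements merged into one kernel-verified Lean document; each statement's English description precedes it below -/
import Mathlib

section
/- (Linear convergence of Simulated SVRG in expectation, option II.) Consider the Simulated SVRG algorithm: at each epoch s, the reference point x̃ = x̃_{s−1} with full gradient h̃ = ∇F(x̃) is fixed, and for t = 1,...,M the iterate is updated by x_t = x_{t−1} − λ ν_t, where ν_t = W(x_{t−1}, v_t) − W(x̃, v_t) + ∇F(x̃) is the variance-reduced simulated gradient (with v_t sampled from v independently, and W(·, v_t) the coupled MLMC unbiased gradient estimators sharing the same randomness); the epoch output x̃_s = x_t for t chosen uniformly at random from {0,...,M−1}. Suppose the step size λ and epoch length M satisfy α = 1/(μ(1 − (4/μ)C_D λ)λM) + ((4/μ)C_D + 2L)λ/(1 − (4/μ)C_D λ) < 1. Then under Assumptions 1–3, E[F(x̃_s)] ≤ F(x⋆) + α^s [F(x̃_0) − F(x⋆)] for all epochs s, where x⋆ is the minimizer of F. -/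
/-!
Fix an epoch with reference point `x̃` and write `Y = X_t - x⋆`. Expanding the square of the update
and taking expectations, the noise `Wd - (∇F(X_t) - ∇F(x̃))` is orthogonal to the
`𝓕_t`-measurable, bounded `Y` (pull-out property of the conditional expectation), and the second
moment of `Wd` is controlled by the coupling bound. Strong convexity turns
`⟪Y, ∇F(X_t)⟫`, `‖X_t - x̃‖²` and `‖∇F(x̃)‖²` into optimality gaps, which gives
`E‖X_{t+1} - x⋆‖² ≤ E‖X_t - x⋆‖² - 2λ(1 - 4C_Dλ/μ) E[F(X_t) - F⋆] + 2λ²(4C_D/μ + 2L) E[F(x̃) - F⋆]`.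
Telescoping over the epoch, with `E‖X_0 - x⋆‖² ≤ (2/μ) E[F(x̃) - F⋆]` and the averaged output of
option II, yields `E[F(x̃_{s+1})] - F⋆ ≤ α (E[F(x̃_s)] - F⋆)`. Every integrability condition comes
from the boundedness of the iterates and of the gradients on the compact set `D`.
-/

open MeasureTheory
open scoped RealInnerProductSpace

section General

variable {E : Type*} [NormedAddCommGroup E]

theorem sq_norm_sub_le_add (u v w : E) :
    ‖u - v‖ ^ 2 ≤ 2 * ‖u - w‖ ^ 2 + 2 * ‖v - w‖ ^ 2 := by
  have h := norm_sub_le (u - w) (v - w)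
  rw [sub_sub_sub_cancel_right] at h
  nlinarith [norm_nonneg (u - v), sq_nonneg (‖u - w‖ - ‖v - w‖)]

theorem IsCompact.exists_norm_le_of_sq_norm_le {X G : Type*} [TopologicalSpace X]
    [SeminormedAddCommGroup G] {D : Set X} (hD : IsCompact D) {f : X → ℝ} (hf : ContinuousOn f D)
    {g : X → G} (h : ∀ x ∈ D, ‖g x‖ ^ 2 ≤ f x) : ∃ C, ∀ x ∈ D, ‖g x‖ ≤ C := by
  obtain ⟨B, hB⟩ := hD.exists_bound_of_continuousOn hf
  exact ⟨√B, fun x hx => Real.le_sqrt_of_sq_le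
    ((h x hx).trans ((Real.le_norm_self _).trans (hB x hx)))⟩

variable [InnerProductSpace ℝ E]

theorem IsLocalMin.hasGradientAt_eq_zero [CompleteSpace E] {f : E → ℝ} {x g : E}
    (hmin : IsLocalMin f x) (hf : HasGradientAt f g x) : g = 0 :=
  (InnerProductSpace.toDual ℝ E).injective <| by
    simpa using hmin.hasFDerivAt_eq_zero hf.hasFDerivAt

theorem measurable_of_hasGradientAt [CompleteSpace E] [MeasurableSpace E] [BorelSpace E]
    {f : E → ℝ} {f' : E → E} (hf : ∀ x, HasGradientAt f (f' x) x) : Measurable f' := by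
  rw [← gradient_eq hf]
  exact (InnerProductSpace.toDual ℝ E).symm.continuous.measurable.comp (measurable_fderiv ℝ f)

theorem sq_norm_sub_smul_add_le (v a b : E) (lam : ℝ) :
    ‖v - lam • (a + b)‖ ^ 2 ≤
      ‖v‖ ^ 2 - 2 * lam * ⟪v, a⟫ - 2 * lam * ⟪v, b⟫ + 2 * lam ^ 2 * (‖a‖ ^ 2 + ‖b‖ ^ 2) := by
  have hab : ‖a + b‖ ^ 2 ≤ 2 * ‖a‖ ^ 2 + 2 * ‖b‖ ^ 2 := by
    simpa using sq_norm_sub_le_add a (-b) 0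
  rw [norm_sub_sq_real, inner_smul_right, inner_add_right, norm_smul, mul_pow,
    Real.norm_eq_abs, sq_abs]
  nlinarith [mul_le_mul_of_nonneg_left hab (sq_nonneg lam)]

section StrongConvexity

variable {F : E → ℝ} {gradF : E → E} {xstar : E} {μ : ℝ}

theorem sq_norm_sub_le_of_strongConvex (hμ : 0 < μ) (hg0 : gradF xstar = 0) {y : E}
    (hsc : F xstar + ⟪gradF xstar, y - xstar⟫ + μ / 2 * ‖y - xstar‖ ^ 2 ≤ F y) :
    ‖y - xstar‖ ^ 2 ≤ 2 / μ * (F y - F xstar) := by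
  rw [hg0, inner_zero_left] at hsc
  rw [div_mul_eq_mul_div, le_div_iff₀ hμ]
  linarith

theorem sub_le_inner_of_strongConvex (hμ : 0 ≤ μ) {x : E}
    (hsc : F x + ⟪gradF x, xstar - x⟫ + μ / 2 * ‖xstar - x‖ ^ 2 ≤ F xstar) :
    F x - F xstar ≤ ⟪x - xstar, gradF x⟫ := by
  rw [← neg_sub x xstar, inner_neg_right, real_inner_comm] at hsc
  nlinarith [mul_nonneg hμ (sq_nonneg ‖xstar - x‖)]

variable {D : Set E} {L CD lam : ℝ}

theorem svrg_sample_bound_le_of_strongConvex (hμ : 0 < μ) (hCD : 0 ≤ CD) (hlam : 0 ≤ lam)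
    (hsc : ∀ x ∈ D, ∀ y ∈ D, F x + ⟪gradF x, y - x⟫ + μ / 2 * ‖y - x‖ ^ 2 ≤ F y)
    (hsm : ∀ x ∈ D, ‖gradF x‖ ^ 2 ≤ 2 * L * (F x - F xstar))
    (hstarD : xstar ∈ D) (hg0 : gradF xstar = 0) {x xr : E} (hx : x ∈ D) (hxr : xr ∈ D) :
    ‖x - xstar‖ ^ 2 - 2 * lam * ⟪x - xstar, gradF x⟫
        + 2 * lam ^ 2 * (CD * ‖x - xr‖ ^ 2 + ‖gradF xr‖ ^ 2)
      ≤ ‖x - xstar‖ ^ 2 - 2 * lam * (1 - 4 / μ * CD * lam) * (F x - F xstar)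
        + 2 * lam ^ 2 * (4 / μ * CD + 2 * L) * (F xr - F xstar) := by
  have hdescent := sub_le_inner_of_strongConvex hμ.le (hsc x hx xstar hstarD)
  have hspread : ‖x - xr‖ ^ 2 ≤ 4 / μ * ((F x - F xstar) + (F xr - F xstar)) := by
    have := sq_norm_sub_le_of_strongConvex hμ hg0 (hsc xstar hstarD x hx)
    have := sq_norm_sub_le_of_strongConvex hμ hg0 (hsc xstar hstarD xr hxr)
    have := sq_norm_sub_le_add x xr xstar
    rw [show 4 / μ = 2 * (2 / μ) by ring]
    linarith
  have h1 := mul_le_mul_of_nonneg_left hdescent (by positivity : 0 ≤ 2 * lam)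
  have h2 := mul_le_mul_of_nonneg_left hspread (by positivity : 0 ≤ 2 * lam ^ 2 * CD)
  have h3 := mul_le_mul_of_nonneg_left (hsm xr hxr) (by positivity : 0 ≤ 2 * lam ^ 2)
  linarith

end StrongConvexity

section Stochastic

variable {Ω : Type*} {m mΩ : MeasurableSpace Ω} {P : Measure Ω}

theorem integrable_comp_of_norm_le {X G : Type*} [SeminormedAddCommGroup X] [ProperSpace X]
    [NormedAddCommGroup G] [IsFiniteMeasure P] {φ : X → G} (hφ : Continuous φ) {Z : Ω → X}
    (hZ : AEStronglyMeasurable Z P) {C : ℝ} (hZC : ∀ ω, ‖Z ω‖ ≤ C) :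
    Integrable (fun ω => φ (Z ω)) P := by
  obtain ⟨B, hB⟩ := (isCompact_closedBall (0 : X) C).exists_bound_of_continuousOn hφ.continuousOn
  exact .of_bound (hφ.comp_aestronglyMeasurable hZ) B
    (ae_of_all _ fun ω => hB _ (mem_closedBall_zero_iff.2 (hZC ω)))

theorem integral_inner_eq_of_condExp_ae_eq [CompleteSpace E] [IsFiniteMeasure P] (hm : m ≤ mΩ)
    {Y f g : Ω → E} (hY : StronglyMeasurable[m] Y) {C : ℝ} (hYC : ∀ ω, ‖Y ω‖ ≤ C)
    (hf : Integrable f P) (hg : P[f|m] =ᵐ[P] g) :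
    ∫ ω, ⟪Y ω, f ω⟫ ∂P = ∫ ω, ⟪Y ω, g ω⟫ ∂P := by
  rw [← integral_condExp hm]
  refine integral_congr_ae ?_
  filter_upwards [condExp_stronglyMeasurable_bilin_of_bound (innerSL ℝ) hm hY hf C
    (ae_of_all _ hYC), hg] with ω hpull hω
  rw [← hω]
  exact hpull

theorem integral_le_of_condExp_le [IsFiniteMeasure P] (hm : m ≤ mΩ) {f g : Ω → ℝ}
    (hg : Integrable g P) (hfg : P[f|m] ≤ᵐ[P] g) : ∫ ω, f ω ∂P ≤ ∫ ω, g ω ∂P := by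
  rw [← integral_condExp hm]
  exact integral_mono_ae integrable_condExp hg hfg

theorem integral_sub_const [IsProbabilityMeasure P] {f : Ω → ℝ} (hf : Integrable f P) (c : ℝ) :
    ∫ ω, (f ω - c) ∂P = ∫ ω, f ω ∂P - c := by
  simp [integral_sub hf (integrable_const c)]

theorem integral_sq_norm_svrg_step_le [FiniteDimensional ℝ E] [IsFiniteMeasure P] (hm : m ≤ mΩ)
    {y yr g gr w : Ω → E} {z : E} {C CD lam : ℝ}
    (hy : StronglyMeasurable[m] y) (hyr : AEStronglyMeasurable yr P)
    (hg : AEStronglyMeasurable g P) (hgr : AEStronglyMeasurable gr P)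
    (hyC : ∀ ω, ‖y ω‖ ≤ C) (hyrC : ∀ ω, ‖yr ω‖ ≤ C)
    (hgC : ∀ ω, ‖g ω‖ ≤ C) (hgrC : ∀ ω, ‖gr ω‖ ≤ C)
    (hw : Integrable w P) (hw2 : Integrable (fun ω => ‖w ω‖ ^ 2) P)
    (hunbias : P[w|m] =ᵐ[P] fun ω => g ω - gr ω)
    (hcouple : P[fun ω => ‖w ω‖ ^ 2|m] ≤ᵐ[P] fun ω => CD * ‖y ω - yr ω‖ ^ 2)
    {Φ : Ω → ℝ} (hΦ : Integrable Φ P)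
    (hΦle : ∀ ω, ‖y ω - z‖ ^ 2 - 2 * lam * ⟪y ω - z, g ω⟫
      + 2 * lam ^ 2 * (CD * ‖y ω - yr ω‖ ^ 2 + ‖gr ω‖ ^ 2) ≤ Φ ω) :
    ∫ ω, ‖y ω - lam • (w ω + gr ω) - z‖ ^ 2 ∂P ≤ ∫ ω, Φ ω ∂P := by
  have hYm : StronglyMeasurable[m] fun ω => y ω - z := hy.sub stronglyMeasurable_const
  have hYC : ∀ ω, ‖y ω - z‖ ≤ C + ‖z‖ := fun ω =>
    (norm_sub_le _ _).trans (by linarith [hyC ω])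
  have hbdd : ∀ φ : E × E × E × E → ℝ, Continuous φ →
      Integrable (fun ω => φ (y ω, yr ω, g ω, gr ω)) P := fun φ hφ =>
    integrable_comp_of_norm_le hφ
      ((hy.mono hm).aestronglyMeasurable.prodMk (hyr.prodMk (hg.prodMk hgr))) fun ω =>
      norm_prod_le_iff.2 ⟨hyC ω, norm_prod_le_iff.2 ⟨hyrC ω, norm_prod_le_iff.2 ⟨hgC ω, hgrC ω⟩⟩⟩
  have hYw : Integrable (fun ω => ⟪y ω - z, w ω⟫) P :=
    (innerSL ℝ).integrable_of_bilin_of_bdd_left _ (hYm.mono hm).aestronglyMeasurable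
      (ae_of_all _ hYC) hw
  set B : Ω → ℝ := fun ω =>
    ‖y ω - z‖ ^ 2 - 2 * lam * ⟪y ω - z, gr ω⟫ + 2 * lam ^ 2 * ‖gr ω‖ ^ 2 with hB_def
  have hB : Integrable B P := hbdd (fun p => ‖p.1 - z‖ ^ 2 - 2 * lam * ⟪p.1 - z, p.2.2.2⟫
    + 2 * lam ^ 2 * ‖p.2.2.2‖ ^ 2) (by fun_prop)
  have hYg : Integrable (fun ω => ⟪y ω - z, g ω - gr ω⟫) P :=
    hbdd (fun p => ⟪p.1 - z, p.2.2.1 - p.2.2.2⟫) (by fun_prop)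
  have hyyr : Integrable (fun ω => CD * ‖y ω - yr ω‖ ^ 2) P :=
    hbdd (fun p => CD * ‖p.1 - p.2.1‖ ^ 2) (by fun_prop)
  calc ∫ ω, ‖y ω - lam • (w ω + gr ω) - z‖ ^ 2 ∂P
      ≤ ∫ ω, (B ω - 2 * lam * ⟪y ω - z, w ω⟫ + 2 * lam ^ 2 * ‖w ω‖ ^ 2) ∂P := by
        refine integral_mono_of_nonneg (ae_of_all _ fun _ => by positivity)
          ((hB.sub (hYw.const_mul _)).add (hw2.const_mul _)) (ae_of_all _ fun ω => ?_)
        have := sq_norm_sub_smul_add_le (y ω - z) (w ω) (gr ω) lam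
        rw [sub_right_comm] at this
        simp only [hB_def]
        linarith
    _ = ∫ ω, B ω ∂P - 2 * lam * ∫ ω, ⟪y ω - z, w ω⟫ ∂P
          + 2 * lam ^ 2 * ∫ ω, ‖w ω‖ ^ 2 ∂P := by
        have hBw : Integrable (fun ω => B ω - 2 * lam * ⟪y ω - z, w ω⟫) P :=
          hB.sub (hYw.const_mul _)
        rw [integral_add hBw (hw2.const_mul _), integral_sub hB (hYw.const_mul _),
          integral_const_mul, integral_const_mul]
    _ ≤ ∫ ω, B ω ∂P - 2 * lam * ∫ ω, ⟪y ω - z, g ω - gr ω⟫ ∂P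
          + 2 * lam ^ 2 * ∫ ω, CD * ‖y ω - yr ω‖ ^ 2 ∂P := by
        rw [integral_inner_eq_of_condExp_ae_eq hm hYm hYC hw hunbias]
        have := integral_le_of_condExp_le hm hyyr hcouple
        gcongr
    _ = ∫ ω, (‖y ω - z‖ ^ 2 - 2 * lam * ⟪y ω - z, g ω⟫
          + 2 * lam ^ 2 * (CD * ‖y ω - yr ω‖ ^ 2 + ‖gr ω‖ ^ 2)) ∂P := by
        have hBg : Integrable (fun ω => B ω - 2 * lam * ⟪y ω - z, g ω - gr ω⟫) P :=
          hB.sub (hYg.const_mul _)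
        rw [← integral_const_mul, ← integral_const_mul, ← integral_sub hB (hYg.const_mul _),
          ← integral_add hBg (hyyr.const_mul _)]
        congr 1 with ω
        simp only [hB_def, inner_sub_right]
        ring
    _ ≤ ∫ ω, Φ ω ∂P := integral_mono (hbdd (fun p => ‖p.1 - z‖ ^ 2 - 2 * lam * ⟪p.1 - z, p.2.2.1⟫
          + 2 * lam ^ 2 * (CD * ‖p.1 - p.2.1‖ ^ 2 + ‖p.2.2.2‖ ^ 2)) (by fun_prop)) hΦ hΦle

section StrongConvexStep

variable [FiniteDimensional ℝ E] [IsProbabilityMeasure P] {F : E → ℝ} {gradF : E → E}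
  {D : Set E} {xstar : E} {μ C : ℝ}

theorem integral_sq_norm_sub_le_of_strongConvex (hF : Continuous F) (hμ : 0 < μ)
    (hsc : ∀ x ∈ D, ∀ y ∈ D, F x + ⟪gradF x, y - x⟫ + μ / 2 * ‖y - x‖ ^ 2 ≤ F y)
    (hstarD : xstar ∈ D) (hg0 : gradF xstar = 0) (hDC : ∀ x ∈ D, ‖x‖ ≤ C)
    {x : Ω → E} (hx : AEStronglyMeasurable x P) (hxD : ∀ ω, x ω ∈ D) :
    ∫ ω, ‖x ω - xstar‖ ^ 2 ∂P ≤ 2 / μ * (∫ ω, F (x ω) ∂P - F xstar) := by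
  have hFx : Integrable (fun ω => F (x ω)) P :=
    integrable_comp_of_norm_le hF hx fun ω => hDC _ (hxD ω)
  calc ∫ ω, ‖x ω - xstar‖ ^ 2 ∂P ≤ ∫ ω, 2 / μ * (F (x ω) - F xstar) ∂P :=
        integral_mono (integrable_comp_of_norm_le (φ := fun p => ‖p - xstar‖ ^ 2) (by fun_prop) hx
            fun ω => hDC _ (hxD ω))
          ((hFx.sub (integrable_const _)).const_mul _)
          fun ω => sq_norm_sub_le_of_strongConvex hμ hg0 (hsc _ hstarD _ (hxD ω))
    _ = 2 / μ * (∫ ω, F (x ω) ∂P - F xstar) := by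
        rw [integral_const_mul, integral_sub_const hFx]

theorem integral_sq_norm_svrg_step_le_of_strongConvex [MeasurableSpace E] [BorelSpace E]
    (hm : m ≤ mΩ) {L CD lam : ℝ} (hF : Continuous F) (hgradF : Measurable gradF)
    (hμ : 0 < μ) (hCD : 0 ≤ CD) (hlam : 0 ≤ lam)
    (hsc : ∀ x ∈ D, ∀ y ∈ D, F x + ⟪gradF x, y - x⟫ + μ / 2 * ‖y - x‖ ^ 2 ≤ F y)
    (hsm : ∀ x ∈ D, ‖gradF x‖ ^ 2 ≤ 2 * L * (F x - F xstar))
    (hstarD : xstar ∈ D) (hg0 : gradF xstar = 0)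
    (hDC : ∀ x ∈ D, ‖x‖ ≤ C) (hgC : ∀ x ∈ D, ‖gradF x‖ ≤ C)
    {x xr w : Ω → E} (hx : StronglyMeasurable[m] x) (hxr : Measurable xr)
    (hxD : ∀ ω, x ω ∈ D) (hxrD : ∀ ω, xr ω ∈ D)
    (hw : Integrable w P) (hw2 : Integrable (fun ω => ‖w ω‖ ^ 2) P)
    (hunbias : P[w|m] =ᵐ[P] fun ω => gradF (x ω) - gradF (xr ω))
    (hcouple : P[fun ω => ‖w ω‖ ^ 2|m] ≤ᵐ[P] fun ω => CD * ‖x ω - xr ω‖ ^ 2) :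
    ∫ ω, ‖x ω - lam • (w ω + gradF (xr ω)) - xstar‖ ^ 2 ∂P ≤
      ∫ ω, ‖x ω - xstar‖ ^ 2 ∂P
        - 2 * lam * (1 - 4 / μ * CD * lam) * (∫ ω, F (x ω) ∂P - F xstar)
        + 2 * lam ^ 2 * (4 / μ * CD + 2 * L) * (∫ ω, F (xr ω) ∂P - F xstar) := by
  have hxm : Measurable x := (hx.mono hm).measurable
  have hsq : Integrable (fun ω => ‖x ω - xstar‖ ^ 2) P :=
    integrable_comp_of_norm_le (φ := fun p => ‖p - xstar‖ ^ 2) (by fun_prop)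
      hxm.aestronglyMeasurable fun ω => hDC _ (hxD ω)
  have hFx : Integrable (fun ω => F (x ω)) P :=
    integrable_comp_of_norm_le hF hxm.aestronglyMeasurable fun ω => hDC _ (hxD ω)
  have hFxr : Integrable (fun ω => F (xr ω)) P :=
    integrable_comp_of_norm_le hF hxr.aestronglyMeasurable fun ω => hDC _ (hxrD ω)
  have hgap : Integrable (fun ω => F (x ω) - F xstar) P := hFx.sub (integrable_const _)
  have hgapr : Integrable (fun ω => F (xr ω) - F xstar) P := hFxr.sub (integrable_const _)
  have hdescent : Integrable (fun ω => ‖x ω - xstar‖ ^ 2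
      - 2 * lam * (1 - 4 / μ * CD * lam) * (F (x ω) - F xstar)) P :=
    hsq.sub (hgap.const_mul _)
  calc _ ≤ ∫ ω, (‖x ω - xstar‖ ^ 2 - 2 * lam * (1 - 4 / μ * CD * lam) * (F (x ω) - F xstar)
          + 2 * lam ^ 2 * (4 / μ * CD + 2 * L) * (F (xr ω) - F xstar)) ∂P :=
        integral_sq_norm_svrg_step_le hm hx hxr.aestronglyMeasurable
          (hgradF.comp hxm).aestronglyMeasurable (hgradF.comp hxr).aestronglyMeasurable
          (fun ω => hDC _ (hxD ω)) (fun ω => hDC _ (hxrD ω)) (fun ω => hgC _ (hxD ω))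
          (fun ω => hgC _ (hxrD ω)) hw hw2 hunbias hcouple (hdescent.add (hgapr.const_mul _))
          fun ω => svrg_sample_bound_le_of_strongConvex hμ hCD hlam hsc hsm hstarD hg0 (hxD ω)
            (hxrD ω)
    _ = _ := by
        rw [integral_add hdescent (hgapr.const_mul _), integral_sub hsq (hgap.const_mul _),
          integral_const_mul, integral_const_mul, integral_sub_const hFx, integral_sub_const hFxr]

end StrongConvexStep

end Stochastic

end General

theorem sum_range_le_of_le_sub_add {d a : ℕ → ℝ} {b : ℝ} (h : ∀ t, d (t + 1) ≤ d t - a t + b)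
    (n : ℕ) : ∑ t ∈ Finset.range n, a t ≤ d 0 - d n + n * b := by
  induction n with
  | zero => simp
  | succ n ih =>
    rw [Finset.sum_range_succ]
    push_cast
    linarith [h n]

theorem mean_sub_le_mul_of_descent {d a : ℕ → ℝ} {M : ℕ} {μ κ β lam c v abar α : ℝ}
    (hM : 1 ≤ M) (hμ : 0 < μ) (hκ : 0 < κ) (hlam : 0 < lam)
    (hstep : ∀ t, d (t + 1) ≤ d t - 2 * lam * κ * (a t - v) + 2 * lam ^ 2 * β * (c - v))
    (hd0 : d 0 ≤ 2 / μ * (c - v)) (hdM : 0 ≤ d M)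
    (hmean : abar = 1 / M * ∑ t ∈ Finset.range M, a t)
    (hα : α = 1 / (μ * κ * lam * M) + β * lam / κ) :
    abar - v ≤ α * (c - v) := by
  have hMpos : (0 : ℝ) < M := by exact_mod_cast hM
  have hsum := sum_range_le_of_le_sub_add (a := fun t => 2 * lam * κ * (a t - v)) hstep M
  rw [← Finset.mul_sum, Finset.sum_sub_distrib, Finset.sum_const, Finset.card_range,
    nsmul_eq_mul] at hsum
  have hsum_eq : ∑ t ∈ Finset.range M, a t = M * abar := by
    rw [hmean]
    field_simp
  have hαM : α * (2 * lam * κ * M) = 2 / μ + M * (2 * lam ^ 2 * β) := by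
    rw [hα]
    field_simp
  have hcontr := congrArg (· * (c - v)) hαM
  rw [hsum_eq] at hsum
  refine le_of_mul_le_mul_left ?_ (by positivity : 0 < 2 * lam * κ * M)
  linarith

theorem simulated_svrg_linear_convergence_general
    {q : ℕ} {Ω : Type*} [mΩ : MeasurableSpace Ω] (P : Measure Ω) [IsProbabilityMeasure P]
    (F : EuclideanSpace ℝ (Fin q) → ℝ)
    (gradF : EuclideanSpace ℝ (Fin q) → EuclideanSpace ℝ (Fin q))
    (hgrad : ∀ x, HasGradientAt F (gradF x) x)
    (D : Set (EuclideanSpace ℝ (Fin q))) (hDcpt : IsCompact D)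
    (μ L CD : ℝ) (hμ : 0 < μ) (hL : 0 < L) (hCD : 0 < CD)
    (xstar : EuclideanSpace ℝ (Fin q)) (hstarD : xstar ∈ D) (hmin : ∀ y, F xstar ≤ F y)
    -- Assumption 2: μ-strong convexity of F on D (first-order form) and L-smoothness bound
    (hsc : ∀ x ∈ D, ∀ y ∈ D, F x + ⟪gradF x, y - x⟫ + μ / 2 * ‖y - x‖ ^ 2 ≤ F y)
    (hsm : ∀ x ∈ D, ‖gradF x‖ ^ 2 ≤ 2 * L * (F x - F xstar))
    -- step size, epoch length and the contraction factor α
    (M : ℕ) (hM : 1 ≤ M) (lam : ℝ) (hlam : 0 < lam)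
    (hden : 0 < 1 - 4 / μ * CD * lam)
    (α : ℝ)
    (hα : α = 1 / (μ * (1 - 4 / μ * CD * lam) * lam * M)
        + (4 / μ * CD + 2 * L) * lam / (1 - 4 / μ * CD * lam))
    -- the algorithm: epoch outputs `xt`, inner iterates `X`, gradients `ν = Wd + ∇F(x̃)`
    (x0 : EuclideanSpace ℝ (Fin q))
    (xt : ℕ → Ω → EuclideanSpace ℝ (Fin q))
    (X ν Wd : ℕ → ℕ → Ω → EuclideanSpace ℝ (Fin q))
    (𝓕 : ℕ → ℕ → MeasurableSpace Ω)
    (hle : ∀ s t, 𝓕 s t ≤ mΩ)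
    (hXmeas : ∀ s t, StronglyMeasurable[𝓕 s t] (X s t))
    (hx0 : ∀ ω, xt 0 ω = x0)
    (hstart : ∀ s ω, X s 0 ω = xt s ω)
    (hupdate : ∀ s t ω, X s (t + 1) ω = X s t ω - lam • ν s (t + 1) ω)
    (hν : ∀ s t ω, ν s (t + 1) ω = Wd s (t + 1) ω + gradF (xt s ω))
    -- Assumption 1: all iterates stay in the compact set D
    (hinD : ∀ s t ω, X s t ω ∈ D) (hrefD : ∀ s ω, xt s ω ∈ D)
    -- integrability
    (hWdint : ∀ s t, Integrable (Wd s (t + 1)) P)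
    (hWdsq : ∀ s t, Integrable (fun ω => ‖Wd s (t + 1) ω‖ ^ 2) P)
    -- unbiasedness and the coupling (variance-reduction) bound, conditionally on the past
    (hunbias : ∀ s t, P[Wd s (t + 1) | 𝓕 s t]
        =ᵐ[P] fun ω => gradF (X s t ω) - gradF (xt s ω))
    (hcouple : ∀ s t, (P[fun ω => ‖Wd s (t + 1) ω‖ ^ 2 | 𝓕 s t])
        ≤ᵐ[P] fun ω => CD * ‖X s t ω - xt s ω‖ ^ 2)
    -- option II: the epoch output is a uniformly chosen inner iterate
    (hout : ∀ s, ∫ ω, F (xt (s + 1) ω) ∂P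
        = (1 / M) * ∑ t ∈ Finset.range M, ∫ ω, F (X s t ω) ∂P) :
    ∀ s : ℕ, ∫ ω, F (xt s ω) ∂P ≤ F xstar + α ^ s * (F x0 - F xstar) := by
  have hg0 : gradF xstar = 0 := IsLocalMin.hasGradientAt_eq_zero (.of_forall hmin) (hgrad xstar)
  have hF : Continuous F :=
    continuous_iff_continuousAt.2 fun x => (hgrad x).differentiableAt.continuousAt
  obtain ⟨R, hR⟩ := hDcpt.isBounded.exists_norm_le
  obtain ⟨G, hG⟩ := hDcpt.exists_norm_le_of_sq_norm_le
    (f := fun x => 2 * L * (F x - F xstar)) (by fun_prop) hsm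
  have hDC : ∀ x ∈ D, ‖x‖ ≤ max R G := fun x hx => (hR x hx).trans (le_max_left _ _)
  have hgC : ∀ x ∈ D, ‖gradF x‖ ≤ max R G := fun x hx => (hG x hx).trans (le_max_right _ _)
  have hxt : ∀ s, xt s = X s 0 := fun s => funext fun ω => (hstart s ω).symm
  have hepoch : ∀ s, ∫ ω, F (xt (s + 1) ω) ∂P - F xstar
      ≤ α * (∫ ω, F (xt s ω) ∂P - F xstar) := fun s =>
    mean_sub_le_mul_of_descent (d := fun t => ∫ ω, ‖X s t ω - xstar‖ ^ 2 ∂P) hM hμ hden hlam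
      (fun t => by
        simp only [hupdate, hν]
        exact integral_sq_norm_svrg_step_le_of_strongConvex (hle s t) hF
          (measurable_of_hasGradientAt hgrad) hμ hCD.le hlam.le hsc hsm hstarD hg0 hDC hgC
          (hXmeas s t) (hxt s ▸ ((hXmeas s 0).mono (hle s 0)).measurable) (hinD s t) (hrefD s)
          (hWdint s t) (hWdsq s t) (hunbias s t) (hcouple s t))
      (by
        simpa only [hxt s] using integral_sq_norm_sub_le_of_strongConvex hF hμ hsc hstarD hg0
          hDC ((hXmeas s 0).mono (hle s 0)).aestronglyMeasurable (hinD s 0))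
      (integral_nonneg fun _ => by positivity) (hout s) hα
  have hα0 : 0 ≤ α := hα ▸ add_nonneg
    (one_div_nonneg.2 (by positivity)) (div_nonneg (by positivity) hden.le)
  intro s
  have := le_geom (u := fun s => ∫ ω, F (xt s ω) ∂P - F xstar) hα0 s fun k _ => hepoch k
  simp only [hx0, integral_const, probReal_univ, one_smul] at this
  linarith

/-- (Linear convergence of Simulated SVRG in expectation, option II.)
Epoch `s+1` starts from the reference `xt s` (with `xt 0 ≡ x0` the deterministic initial
point), runs `M` inner steps `X s (t+1) = X s t − λ ν s (t+1)` with the variance-reduced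
simulated gradient `ν s (t+1) = Wd s (t+1) + ∇F(xt s)`, where conditionally on the past
`E[Wd s (t+1) | 𝓕 s t] = ∇F(X s t) − ∇F(xt s)` (unbiasedness of the coupled MLMC estimators)
and `E[‖Wd s (t+1)‖² | 𝓕 s t] ≤ C_D ‖X s t − xt s‖²` (coupling bound); the epoch output
`xt (s+1)` is `X s t` for `t` uniform on `{0, …, M−1}` (option II, expressed through `hout`).
If `λ` and `M` are such that
`α = 1/(μ(1 − (4/μ)C_D λ)λM) + ((4/μ)C_D + 2L)λ/(1 − (4/μ)C_D λ) < 1`, then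
`E[F(xt s)] ≤ F(x⋆) + α^s (F(x0) − F(x⋆))` for every epoch `s`. -/
theorem simulated_svrg_linear_convergence
    {q : ℕ} {Ω : Type*} [mΩ : MeasurableSpace Ω] (P : Measure Ω) [IsProbabilityMeasure P]
    (F : EuclideanSpace ℝ (Fin q) → ℝ)
    (gradF : EuclideanSpace ℝ (Fin q) → EuclideanSpace ℝ (Fin q))
    (hgrad : ∀ x, HasGradientAt F (gradF x) x)
    (D : Set (EuclideanSpace ℝ (Fin q))) (hDcpt : IsCompact D)
    (μ L CD : ℝ) (hμ : 0 < μ) (hL : 0 < L) (hCD : 0 < CD)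
    (xstar : EuclideanSpace ℝ (Fin q)) (hstarD : xstar ∈ D) (hmin : ∀ y, F xstar ≤ F y)
    -- Assumption 2: μ-strong convexity of F on D (first-order form) and L-smoothness bound
    (hsc : ∀ x ∈ D, ∀ y ∈ D, F x + ⟪gradF x, y - x⟫ + μ / 2 * ‖y - x‖ ^ 2 ≤ F y)
    (hsm : ∀ x ∈ D, ‖gradF x‖ ^ 2 ≤ 2 * L * (F x - F xstar))
    -- step size, epoch length and the contraction factor α
    (M : ℕ) (hM : 1 ≤ M) (lam : ℝ) (hlam : 0 < lam)
    (hden : 0 < 1 - 4 / μ * CD * lam)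
    (α : ℝ)
    (hα : α = 1 / (μ * (1 - 4 / μ * CD * lam) * lam * M)
        + (4 / μ * CD + 2 * L) * lam / (1 - 4 / μ * CD * lam))
    (hα1 : α < 1)
    -- the algorithm: epoch outputs `xt`, inner iterates `X`, gradients `ν = Wd + ∇F(x̃)`
    (x0 : EuclideanSpace ℝ (Fin q)) (hx0D : x0 ∈ D)
    (xt : ℕ → Ω → EuclideanSpace ℝ (Fin q))
    (X ν Wd : ℕ → ℕ → Ω → EuclideanSpace ℝ (Fin q))
    (𝓕 : ℕ → ℕ → MeasurableSpace Ω)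
    (hle : ∀ s t, 𝓕 s t ≤ mΩ) (hmono : ∀ s, Monotone (𝓕 s))
    (hXmeas : ∀ s t, StronglyMeasurable[𝓕 s t] (X s t))
    (hrefmeas : ∀ s, StronglyMeasurable[𝓕 s 0] (xt s))
    (hx0 : ∀ ω, xt 0 ω = x0)
    (hstart : ∀ s ω, X s 0 ω = xt s ω)
    (hupdate : ∀ s t ω, X s (t + 1) ω = X s t ω - lam • ν s (t + 1) ω)
    (hν : ∀ s t ω, ν s (t + 1) ω = Wd s (t + 1) ω + gradF (xt s ω))
    -- Assumption 1: all iterates stay in the compact set D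
    (hinD : ∀ s t ω, X s t ω ∈ D) (hrefD : ∀ s ω, xt s ω ∈ D)
    -- integrability
    (hWdint : ∀ s t, Integrable (Wd s (t + 1)) P)
    (hWdsq : ∀ s t, Integrable (fun ω => ‖Wd s (t + 1) ω‖ ^ 2) P)
    (hFint : ∀ s, Integrable (fun ω => F (xt s ω)) P)
    (hFXint : ∀ s t, Integrable (fun ω => F (X s t ω)) P)
    -- unbiasedness and the coupling (variance-reduction) bound, conditionally on the past
    (hunbias : ∀ s t, P[Wd s (t + 1) | 𝓕 s t]
        =ᵐ[P] fun ω => gradF (X s t ω) - gradF (xt s ω))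
    (hcouple : ∀ s t, (P[fun ω => ‖Wd s (t + 1) ω‖ ^ 2 | 𝓕 s t])
        ≤ᵐ[P] fun ω => CD * ‖X s t ω - xt s ω‖ ^ 2)
    -- option II: the epoch output is a uniformly chosen inner iterate
    (hout : ∀ s, ∫ ω, F (xt (s + 1) ω) ∂P
        = (1 / M) * ∑ t ∈ Finset.range M, ∫ ω, F (X s t ω) ∂P) :
    ∀ s : ℕ, ∫ ω, F (xt s ω) ∂P ≤ F xstar + α ^ s * (F x0 - F xstar) :=
  simulated_svrg_linear_convergence_general (mΩ := mΩ) P F gradF hgrad D hDcpt μ L CD hμ hL hCD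
    xstar hstarD hmin hsc hsm M hM lam hlam hden α hα x0 xt X ν Wd 𝓕 hle hXmeas hx0 hstart hupdate
    hν hinD hrefD hWdint hWdsq hunbias hcouple hout
end

section
/- (Almost sure ε-optimality of Simulated SCSG.) Let {x̃_s}_{s≥0} be the epoch outputs of the Simulated SCSG algorithm and define ỹ_s = min_{t ≤ s} {F(x̃_t) − F(x⋆)}. Under the hypotheses guaranteeing the per-epoch recursion E[F(x̃_s) − F(x⋆)] ≤ α·E[F(x̃_{s−1}) − F(x⋆)] + ε (uniformly over the starting point in D) with 0 < α < 1, and given that sup_{x∈D}{F(x) − F(x⋆)} ≤ 2l_D, one has with probability 1: inf_{s≥0} ỹ_s ≤ ε/(1−α). -/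
/-!
Let `G n` be the event that `Z 0, …, Z n` all exceed a level `c > 0`. Integrating the recursion
over `G n ∈ ℱ n` and using `Z n > c` there, which turns the additive `ε` into the multiplicative
`ε / c`, gives `∫_{G (n+1)} Z (n+1) ≤ (α + ε / c) ∫_{G n} Z n`. For `c > ε / (1 - α)` the factor is
below `1`, so `P (G n) ≤ c⁻¹ ∫_{G n} Z n` decays geometrically and almost surely some `Z s ≤ c`.
-/

open MeasureTheory ProbabilityTheory Filter Topology

theorem setIntegral_le_setIntegral_of_condExp_le {Ω : Type*} {m m₀ : MeasurableSpace Ω}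
    {μ : Measure[m₀] Ω} [IsFiniteMeasure μ] (hm : m ≤ m₀) {f g : Ω → ℝ}
    (hf : Integrable f μ) (hg : Integrable g μ) (hfg : μ[f | m] ≤ᵐ[μ] g) {A : Set Ω}
    (hA : MeasurableSet[m] A) : ∫ x in A, f x ∂μ ≤ ∫ x in A, g x ∂μ := by
  rw [← setIntegral_condExp hm hf hA]
  exact setIntegral_mono_ae integrable_condExp.integrableOn hg.integrableOn hfg

namespace ProbabilityTheory

def staysAbove {Ω : Type*} (Z : ℕ → Ω → ℝ) (c : ℝ) (n : ℕ) : Set Ω :=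
  {ω | ∀ j ≤ n, c < Z j ω}

section

variable {Ω : Type*} {m₀ : MeasurableSpace Ω} {μ : Measure Ω} {ℱ : Filtration ℕ m₀}
  {Z : ℕ → Ω → ℝ} {α ε c : ℝ}

theorem antitone_staysAbove (Z : ℕ → Ω → ℝ) (c : ℝ) : Antitone (staysAbove Z c) :=
  fun _ _ hnk _ hω j hj => hω j (hj.trans hnk)

theorem measurableSet_staysAbove (hZ : Adapted ℱ Z) (n : ℕ) :
    MeasurableSet[ℱ n] (staysAbove Z c n) := by
  have : staysAbove Z c n = ⋂ j ∈ Set.Iic n, {ω | c < Z j ω} := by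
    ext ω; simp [staysAbove]
  rw [this]
  exact .biInter (Set.to_countable _) fun j hj =>
    measurableSet_lt measurable_const ((hZ j).mono (ℱ.mono hj) le_rfl)

theorem mul_measureReal_staysAbove_le [IsFiniteMeasure μ] {n : ℕ} (hZ : Adapted ℱ Z)
    (hint : Integrable (Z n) μ) :
    c * μ.real (staysAbove Z c n) ≤ ∫ ω in staysAbove Z c n, Z n ω ∂μ := by
  rw [mul_comm, ← smul_eq_mul, ← setIntegral_const]
  exact setIntegral_mono_on (integrable_const c).integrableOn hint.integrableOn
    (ℱ.le n _ (measurableSet_staysAbove hZ n)) fun ω hω => (hω n le_rfl).le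

theorem setIntegral_staysAbove_succ_le [IsFiniteMeasure μ] (hZ0 : ∀ s ω, 0 ≤ Z s ω)
    (hZ : Adapted ℱ Z) (hint : ∀ s, Integrable (Z s) μ)
    (hrec : ∀ s, μ[Z (s + 1) | ℱ s] ≤ᵐ[μ] fun ω => α * Z s ω + ε)
    (hε : 0 ≤ ε) (hc : 0 < c) (n : ℕ) :
    ∫ ω in staysAbove Z c (n + 1), Z (n + 1) ω ∂μ
      ≤ (α + ε / c) * ∫ ω in staysAbove Z c n, Z n ω ∂μ := by
  set A := staysAbove Z c n
  have hA := measurableSet_staysAbove (c := c) hZ n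
  have hmass : ε * μ.real A ≤ ε / c * ∫ ω in A, Z n ω ∂μ := by
    rw [div_mul_eq_mul_div, le_div_iff₀ hc, mul_assoc, mul_comm (μ.real A)]
    exact mul_le_mul_of_nonneg_left (mul_measureReal_staysAbove_le hZ (hint n)) hε
  calc ∫ ω in staysAbove Z c (n + 1), Z (n + 1) ω ∂μ
      ≤ ∫ ω in A, Z (n + 1) ω ∂μ :=
        setIntegral_mono_set (hint _).integrableOn (.of_forall (hZ0 _))
          (antitone_staysAbove Z c n.le_succ).eventuallyLE
    _ ≤ ∫ ω in A, (α * Z n ω + ε) ∂μ :=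
        setIntegral_le_setIntegral_of_condExp_le (ℱ.le n) (hint _)
          (((hint n).const_mul α).add (integrable_const ε)) (hrec n) hA
    _ = α * ∫ ω in A, Z n ω ∂μ + ε * μ.real A := by
        rw [integral_add ((hint n).const_mul α).integrableOn (integrable_const ε).integrableOn,
          integral_const_mul, setIntegral_const, smul_eq_mul, mul_comm ε]
    _ ≤ (α + ε / c) * ∫ ω in A, Z n ω ∂μ := by linarith

theorem tendsto_measureReal_staysAbove [IsFiniteMeasure μ] (hZ0 : ∀ s ω, 0 ≤ Z s ω)
    (hZ : Adapted ℱ Z) (hint : ∀ s, Integrable (Z s) μ)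
    (hrec : ∀ s, μ[Z (s + 1) | ℱ s] ≤ᵐ[μ] fun ω => α * Z s ω + ε)
    (hα : 0 ≤ α) (hε : 0 ≤ ε) (hc : 0 < c) (hρ : α + ε / c < 1) :
    Tendsto (fun n => μ.real (staysAbove Z c n)) atTop (𝓝 0) := by
  set a : ℕ → ℝ := fun n => ∫ ω in staysAbove Z c n, Z n ω ∂μ
  have hρ0 : 0 ≤ α + ε / c := by positivity
  have ha : ∀ n, a n ≤ (α + ε / c) ^ n * a 0 := fun n =>
    le_geom hρ0 n fun k _ => setIntegral_staysAbove_succ_le hZ0 hZ hint hrec hε hc k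
  have hbound : ∀ n, μ.real (staysAbove Z c n) ≤ (α + ε / c) ^ n * a 0 / c := fun n => by
    rw [le_div_iff₀ hc, mul_comm]
    exact (mul_measureReal_staysAbove_le hZ (hint n)).trans (ha n)
  refine squeeze_zero (fun _ => measureReal_nonneg) hbound ?_
  simpa using ((tendsto_pow_atTop_nhds_zero_of_lt_one hρ0 hρ).mul_const (a 0)).div_const c

theorem ae_exists_le_of_condExp_le [IsFiniteMeasure μ] (hZ0 : ∀ s ω, 0 ≤ Z s ω)
    (hZ : Adapted ℱ Z) (hint : ∀ s, Integrable (Z s) μ)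
    (hrec : ∀ s, μ[Z (s + 1) | ℱ s] ≤ᵐ[μ] fun ω => α * Z s ω + ε)
    (hα : 0 ≤ α) (hε : 0 ≤ ε) (hc : 0 < c) (hρ : α + ε / c < 1) :
    ∀ᵐ ω ∂μ, ∃ s, Z s ω ≤ c := by
  have hnull : μ (⋂ n, staysAbove Z c n) = 0 := by
    rw [← measureReal_eq_zero_iff]
    refine le_antisymm (ge_of_tendsto'
      (tendsto_measureReal_staysAbove hZ0 hZ hint hrec hα hε hc hρ)
      fun n => measureReal_mono (Set.iInter_subset _ n)) measureReal_nonneg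
  exact measure_mono_null (fun ω hω => Set.mem_iInter.2 fun _ j _ => not_le.1 fun h => hω ⟨j, h⟩)
    hnull

theorem ae_iInf_le_of_condExp_le [IsFiniteMeasure μ] (hZ0 : ∀ s ω, 0 ≤ Z s ω)
    (hZ : Adapted ℱ Z) (hint : ∀ s, Integrable (Z s) μ)
    (hrec : ∀ s, μ[Z (s + 1) | ℱ s] ≤ᵐ[μ] fun ω => α * Z s ω + ε)
    (hα : 0 ≤ α) (hα1 : α < 1) (hε : 0 ≤ ε) :
    ∀ᵐ ω ∂μ, ⨅ s, Z s ω ≤ ε / (1 - α) := by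
  have h1α : 0 < 1 - α := sub_pos.2 hα1
  have hlevel : ∀ m : ℕ, ∀ᵐ ω ∂μ, ∃ s, Z s ω ≤ ε / (1 - α) + 1 / (m + 1) := fun m => by
    have hM : ε / (1 - α) < ε / (1 - α) + 1 / (m + 1) := lt_add_of_pos_right _ (by positivity)
    have hc : 0 < ε / (1 - α) + 1 / (m + 1) := by positivity
    refine ae_exists_le_of_condExp_le hZ0 hZ hint hrec hα hε hc ?_
    rw [← lt_sub_iff_add_lt', div_lt_iff₀ hc, ← div_lt_iff₀' h1α]
    exact hM
  filter_upwards [ae_all_iff.2 hlevel] with ω hω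
  refine le_of_forall_pos_le_add fun η hη => ?_
  obtain ⟨m, hm⟩ := exists_nat_one_div_lt hη
  obtain ⟨s, hs⟩ := hω m
  exact ciInf_le_of_le ⟨0, Set.forall_mem_range.2 (hZ0 · ω)⟩ s (by linarith)

end

end ProbabilityTheory

/-- (Almost sure ε-optimality of Simulated SCSG.) If the epoch outputs
`x̃ s` of the Simulated SCSG algorithm lie in a compact set `D` on which `F − F(x⋆)` is bounded
by `2 l_D`, and the conditional per-epoch recursion
`E[F(x̃ (s+1)) − F(x⋆) | past] ≤ α (F(x̃ s) − F(x⋆)) + ε` holds with `0 < α < 1`, then with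
probability one the running minimum `ỹ s = min_{t ≤ s} (F(x̃ t) − F(x⋆))` satisfies
`inf_s ỹ s ≤ ε / (1 − α)`. -/
theorem simulated_scsg_as_eps_optimality
    {p : ℕ} {Ω : Type*} [mΩ : MeasurableSpace Ω] (P : Measure Ω) [IsProbabilityMeasure P]
    (F : EuclideanSpace ℝ (Fin p) → ℝ) (xstar : EuclideanSpace ℝ (Fin p))
    (D : Set (EuclideanSpace ℝ (Fin p)))
    (xt : ℕ → Ω → EuclideanSpace ℝ (Fin p)) (hin : ∀ s ω, xt s ω ∈ D)
    (lD : ℝ) (hbd : ∀ x ∈ D, F x - F xstar ≤ 2 * lD)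
    (hmin : ∀ y, F xstar ≤ F y)
    (𝓕 : ℕ → MeasurableSpace Ω) (hle : ∀ s, 𝓕 s ≤ mΩ) (hmono : Monotone 𝓕)
    (hadapted : ∀ s, Measurable[𝓕 s] fun ω => F (xt s ω))
    (α ε : ℝ) (hα0 : 0 < α) (hα1 : α < 1) (hε : 0 < ε)
    (hrec : ∀ s, (P[fun ω => F (xt (s + 1) ω) - F xstar | 𝓕 s])
        ≤ᵐ[P] fun ω => α * (F (xt s ω) - F xstar) + ε) :
    ∀ᵐ ω ∂P, (⨅ s : ℕ,
        (Finset.range (s + 1)).inf' (by simp) fun t => F (xt t ω) - F xstar)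
      ≤ ε / (1 - α) := by
  set Z : ℕ → Ω → ℝ := fun s ω => F (xt s ω) - F xstar
  let ℱ : Filtration ℕ mΩ := ⟨𝓕, hmono, hle⟩
  have hZ0 : ∀ s ω, 0 ≤ Z s ω := fun s ω => sub_nonneg.2 (hmin _)
  have hZ : Adapted ℱ Z := fun s => (hadapted s).sub_const _
  have hint : ∀ s, Integrable (Z s) P := fun s =>
    .of_bound hZ.measurable.aestronglyMeasurable (2 * lD) (.of_forall fun ω => by
      rw [Real.norm_of_nonneg (hZ0 s ω)]
      exact hbd _ (hin s ω))
  filter_upwards [ae_iInf_le_of_condExp_le hZ0 hZ hint hrec hα0.le hα1 hε.le] with ω hω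
  exact (ciInf_mono ⟨0, Set.forall_mem_range.2 fun s => Finset.le_inf' _ _ fun t _ => hZ0 t ω⟩
    fun s => Finset.inf'_le _ (Finset.self_mem_range_succ s)).trans hω
end
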